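/- Let λ be a minimal root and t ∈ supp(λ) with λ_t = 1. If at least four elements of supp(λ) \ {t} are adjacent to t in the Coxeter graph, then ρ(t) λ is a positive root that is not minimal. -/

import Mathlib

open Real

variable {B : Type*}

/-- The pairing constant `⟨α_s, α_t⟩` of the standard bilinear form:
`-cos (π / M s t)` if `M s t ≠ 0`, and `-1` if `M s t = 0` (i.e. `m_{s,t} = ∞`). -/
noncomputable def pairing (M : CoxeterMatrix B) (s t : B) : ℝ :=
  if M s t = 0 then -1 else -Real.cos (Real.pi / (M s t : ℝ))

/-- The standard symmetric bilinear form on `V = B → ℝ`. -/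
noncomputable def form [Fintype B] (M : CoxeterMatrix B) (v w : B → ℝ) : ℝ :=
  ∑ s, ∑ t, v s * w t * pairing M s t

/-- The simple root `α_s`, i.e. the standard basis vector at `s`. -/
noncomputable def sroot [DecidableEq B] (s : B) : B → ℝ := Pi.single s 1

/-- `λ` is a root: `λ = ρ(w) α_s` for some `w ∈ W`, `s ∈ B`. -/
def IsRoot [DecidableEq B] (M : CoxeterMatrix B)
    (ρ : M.Group →* Module.End ℝ (B → ℝ)) (lam : B → ℝ) : Prop :=
  ∃ (w : M.Group) (s : B), ρ w (sroot s) = lam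

/-- `λ` is positive: all coordinates are nonnegative. -/
def IsPos (lam : B → ℝ) : Prop := ∀ s, 0 ≤ lam s

/-- `λ` is negative: all coordinates are nonpositive. -/
def IsNeg (lam : B → ℝ) : Prop := ∀ s, lam s ≤ 0

/-- `λ` is a positive root. -/
def IsPosRoot [DecidableEq B] (M : CoxeterMatrix B)
    (ρ : M.Group →* Module.End ℝ (B → ℝ)) (lam : B → ℝ) : Prop :=
  IsRoot M ρ lam ∧ IsPos lam

/-- `λ` dominates `μ`: for every `w ∈ W`, if `ρ(w) μ` is positive then so is `ρ(w) λ`. -/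
def Dominates (M : CoxeterMatrix B)
    (ρ : M.Group →* Module.End ℝ (B → ℝ)) (lam mu : B → ℝ) : Prop :=
  ∀ w : M.Group, IsPos (ρ w mu) → IsPos (ρ w lam)

/-- `λ` is a minimal root: a positive root dominating no positive root other than itself. -/
def IsMinimal [DecidableEq B] (M : CoxeterMatrix B)
    (ρ : M.Group →* Module.End ℝ (B → ℝ)) (lam : B → ℝ) : Prop :=
  IsPosRoot M ρ lam ∧
    ∀ mu, IsPosRoot M ρ mu → Dominates M ρ lam mu → mu = lam

/-- The depth `δ(λ)` of a positive root:
the least Coxeter length of a `w ∈ W` with `ρ(w⁻¹) λ` negative. -/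
noncomputable def depth (M : CoxeterMatrix B)
    (ρ : M.Group →* Module.End ℝ (B → ℝ)) (lam : B → ℝ) : ℕ :=
  sInf {n | ∃ w : M.Group, IsNeg (ρ w⁻¹ lam) ∧ M.toCoxeterSystem.length w = n}

/-- The partial order `λ ⪯ μ` on positive roots:
`μ = ρ(w) λ` for some `w` with `δ(μ) = ℓ(w) + δ(λ)`. -/
def PLE (M : CoxeterMatrix B)
    (ρ : M.Group →* Module.End ℝ (B → ℝ)) (lam mu : B → ℝ) : Prop :=
  ∃ w : M.Group, mu = ρ w lam ∧
    depth M ρ mu = M.toCoxeterSystem.length w + depth M ρ lam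

/-- The Coxeter graph of `M`: distinct `s`, `t` are adjacent iff `M s t ≥ 3` or `M s t = 0`. -/
def coxGraph (M : CoxeterMatrix B) : SimpleGraph B where
  Adj s t := s ≠ t ∧ (M s t = 0 ∨ 3 ≤ M s t)
  symm := by
    constructor
    intro s t h
    exact ⟨h.1.symm, by rw [M.symmetric t s]; exact h.2⟩
  loopless := by constructor; intro s h; exact h.1 rfl

/-- The support of a vector `λ ∈ V`. -/
def supp (lam : B → ℝ) : Set B := {s | lam s ≠ 0}

/-!
The coordinates of a positive root are all `0` or `≥ 1`: splitting off a maximal alternating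
suffix `w = u · (⋯ s t)` reduces `ρ(w) α_s` to the rank-two formula `ρ(⋯ s t) α_s = a α_s + b α_t`
with `a, b` of the form `sin (k π / m) / sin (π / m)`, and induction on the length of `w`. Hence
`⟨λ, α_t⟩ ≤ λ_t - 4 · ½ = -1`, so `μ = s_t λ = λ - 2 ⟨λ, α_t⟩ α_t` is a positive root with
`⟨μ, α_t⟩ ≥ 1`.

Roots `γ, β` with `⟨γ, β⟩ ≥ 1` are comparable for dominance: if `w₁` made `γ` negative and `β`
positive while `w₂` did the opposite, the infinitely many roots `(r_γ r_β)^j γ = a_j γ + b_j β`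
(`a_j ≥ 1`, `b_j ≤ 0`) would all lie in `N(w₁) ∪ -N(w₂)`, where the inversion set `N(w)` of
positive roots made negative by `w` is finite. So a minimal `μ` with `⟨μ, α_t⟩ ≥ 1` is `α_t`:
it cannot dominate `α_t` without being equal to it, and `α_t` cannot dominate `μ ≠ α_t`, since
`s_t` keeps `μ` positive and negates `α_t`. But `μ = α_t` would give `λ = -α_t`.
-/

section Pairing

variable (M : CoxeterMatrix B)

lemma pairing_self (s : B) : pairing M s s = 1 := by
  simp [pairing, Real.cos_pi]

lemma pairing_comm (s t : B) : pairing M s t = pairing M t s := by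
  rw [pairing, pairing, M.symmetric s t]

lemma CoxeterMatrix.two_le_of_ne_of_ne_zero {s t : B} (hst : s ≠ t) (h0 : M s t ≠ 0) :
    2 ≤ M s t := by
  have := M.off_diagonal s t hst
  omega

lemma pairing_nonpos {s t : B} (hst : s ≠ t) : pairing M s t ≤ 0 := by
  unfold pairing
  split_ifs with h0
  · norm_num
  · have h2 : (2 : ℝ) ≤ M s t := by exact_mod_cast M.two_le_of_ne_of_ne_zero hst h0
    have hle : π / M s t ≤ π / 2 := div_le_div_of_nonneg_left pi_pos.le two_pos h2
    have hpos : 0 < π / M s t := by positivity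
    linarith [cos_nonneg_of_mem_Icc ⟨by linarith, hle⟩]

lemma pairing_le_neg_half_of_adj {s t : B} (h : (coxGraph M).Adj s t) :
    pairing M s t ≤ -(1 / 2) := by
  obtain ⟨-, h0 | h3⟩ := h
  · norm_num [pairing, h0]
  · have h3' : (3 : ℝ) ≤ M s t := by exact_mod_cast h3
    have hle : π / M s t ≤ π / 3 := div_le_div_of_nonneg_left pi_pos.le three_pos h3'
    have hcos : cos (π / 3) ≤ cos (π / M s t) :=
      cos_le_cos_of_nonneg_of_le_pi (by positivity) (by linarith [pi_pos]) hle
    rw [cos_pi_div_three] at hcos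
    rw [pairing, if_neg (by omega)]
    linarith

end Pairing

section Form

variable [Fintype B] (M : CoxeterMatrix B)

lemma form_comm (v w : B → ℝ) : form M v w = form M w v := by
  rw [form, form, Finset.sum_comm]
  refine Finset.sum_congr rfl fun s _ => Finset.sum_congr rfl fun t _ => ?_
  rw [pairing_comm]
  ring

lemma form_add_left (v v' w : B → ℝ) : form M (v + v') w = form M v w + form M v' w := by
  simp only [form, Pi.add_apply, add_mul, Finset.sum_add_distrib]

lemma form_smul_left (a : ℝ) (v w : B → ℝ) : form M (a • v) w = a * form M v w := by
  simp only [form, Pi.smul_apply, smul_eq_mul, Finset.mul_sum, mul_assoc]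

lemma form_neg_left (v w : B → ℝ) : form M (-v) w = -form M v w := by
  simpa using form_smul_left M (-1) v w

lemma form_sub_left (v v' w : B → ℝ) : form M (v - v') w = form M v w - form M v' w := by
  rw [sub_eq_add_neg, form_add_left, form_neg_left, sub_eq_add_neg]

lemma form_smul_right (a : ℝ) (v w : B → ℝ) : form M v (a • w) = a * form M v w := by
  rw [form_comm, form_smul_left, form_comm M w]

lemma form_sub_right (v w w' : B → ℝ) : form M v (w - w') = form M v w - form M v w' := by
  rw [form_comm, form_sub_left, form_comm M w, form_comm M w']

lemma form_zero_left (w : B → ℝ) : form M 0 w = 0 := by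
  simp [form]

variable [DecidableEq B]

lemma form_sroot_right (v : B → ℝ) (t : B) :
    form M v (sroot t) = ∑ u, v u * pairing M u t := by
  simp [form, sroot, Pi.single_apply]

lemma form_sroot_sroot (s t : B) : form M (sroot s) (sroot t) = pairing M s t := by
  rw [form_sroot_right]
  simp [sroot, Pi.single_apply]

lemma form_sroot_self (s : B) : form M (sroot s) (sroot s) = 1 := by
  rw [form_sroot_sroot, pairing_self]

end Form

lemma Real.sin_le_sin_of_le_of_le_pi_sub {θ x : ℝ} (hθ : 0 ≤ θ) (h₁ : θ ≤ x)
    (h₂ : x ≤ π - θ) : sin θ ≤ sin x := by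
  rcases le_total x (π / 2) with hx | hx
  · exact sin_le_sin_of_le_of_le_pi_div_two (by linarith [pi_pos]) hx h₁
  · rw [← sin_pi_sub x]
    exact sin_le_sin_of_le_of_le_pi_div_two (by linarith [pi_pos]) (by linarith) (by linarith)

lemma Real.sin_pi_div_pos {m : ℕ} (hm : 2 ≤ m) : 0 < sin (π / m) := by
  have h2 : (2 : ℝ) ≤ m := by exact_mod_cast hm
  apply sin_pos_of_pos_of_lt_pi (by positivity)
  linarith [div_le_div_of_nonneg_left pi_pos.le two_pos h2, pi_pos]

section Dihedral

variable (M : CoxeterMatrix B)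

/-- The coefficient `sin (k π / m) / sin (π / m)` (or `k` when `m = ∞`) in the action of the
dihedral group generated by `s` and `t` on `span {α_s, α_t}`. -/
noncomputable def dihedralCoeff (s t : B) (k : ℕ) : ℝ :=
  if M s t = 0 then k else sin (k * (π / M s t)) / sin (π / M s t)

variable {M} {s t : B}

lemma dihedralCoeff_zero : dihedralCoeff M s t 0 = 0 := by
  simp [dihedralCoeff]

lemma dihedralCoeff_one (hst : s ≠ t) : dihedralCoeff M s t 1 = 1 := by
  unfold dihedralCoeff
  split_ifs with h0
  · norm_num
  · rw [Nat.cast_one, one_mul, div_self (sin_pi_div_pos (M.two_le_of_ne_of_ne_zero hst h0)).ne']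

lemma dihedralCoeff_add_two (hst : s ≠ t) (k : ℕ) :
    dihedralCoeff M s t (k + 2) =
      -2 * pairing M s t * dihedralCoeff M s t (k + 1) - dihedralCoeff M s t k := by
  unfold dihedralCoeff pairing
  split_ifs with h0
  · push_cast
    ring
  · have hsin := (sin_pi_div_pos (M.two_le_of_ne_of_ne_zero hst h0)).ne'
    set θ := π / M s t
    have h₁ : ((k : ℝ) + 2) * θ = ((k : ℝ) + 1) * θ + θ := by ring
    have h₂ : (k : ℝ) * θ = ((k : ℝ) + 1) * θ - θ := by ring
    push_cast
    rw [h₁, h₂, sin_add, sin_sub]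
    field_simp
    ring

lemma dihedralCoeff_eq_zero_or_one_le (hst : s ≠ t) {k : ℕ} (hk : M s t = 0 ∨ k ≤ M s t) :
    dihedralCoeff M s t k = 0 ∨ 1 ≤ dihedralCoeff M s t k := by
  unfold dihedralCoeff
  split_ifs with h0
  · rcases k.eq_zero_or_pos with rfl | hk0
    · simp
    · exact Or.inr (by exact_mod_cast hk0)
  replace hk : k ≤ M s t := hk.resolve_left h0
  have hsin := sin_pi_div_pos (M.two_le_of_ne_of_ne_zero hst h0)
  have hm : (0 : ℝ) < M s t := by exact_mod_cast Nat.pos_of_ne_zero h0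
  set θ := π / M s t with hθ
  have hmθ : (M s t : ℝ) * θ = π := by rw [hθ, mul_div_cancel₀ _ hm.ne']
  rcases k.eq_zero_or_pos with rfl | hk0
  · simp
  rcases hk.eq_or_lt with rfl | hlt
  · simp [hmθ]
  refine Or.inr ((one_le_div hsin).2 (sin_le_sin_of_le_of_le_pi_sub (by positivity) ?_ ?_))
  · have : (1 : ℝ) ≤ k := by exact_mod_cast hk0
    nlinarith [show 0 < θ by positivity]
  · have : (k : ℝ) + 1 ≤ M s t := by exact_mod_cast hlt
    nlinarith [pi_pos]

end Dihedral

namespace CoxeterSystem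

variable {W : Type*} [Group W] {M : CoxeterMatrix B} (cs : CoxeterSystem M W)

theorem not_isRightDescent_of_length_mul_wordProd_cons {u : W} {i : B} {ω : List B}
    (h : cs.length (u * (cs.simple i * cs.wordProd ω)) = cs.length u + (ω.length + 1)) :
    ¬ cs.IsRightDescent u i := by
  intro hi
  have := cs.isRightDescent_iff.mp hi
  have := cs.length_mul_le (u * cs.simple i) (cs.wordProd ω)
  have := cs.length_wordProd_le ω
  rw [mul_assoc] at *
  omega

theorem exists_alternatingWord_suffix {w : W} {s t : B} (ht : cs.IsRightDescent w t) :
    ∃ u m, w = u * cs.wordProd (alternatingWord s t m) ∧ cs.length u + m = cs.length w ∧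
      0 < m ∧ ¬ cs.IsRightDescent u s ∧ ¬ cs.IsRightDescent u t := by
  classical
  set Q : ℕ → Prop := fun m =>
    ∃ u, w = u * cs.wordProd (alternatingWord s t m) ∧ cs.length u + m = cs.length w
  have hQ1 : Q 1 := ⟨w * cs.simple t, by simp [alternatingWord],
    cs.isRightDescent_iff.mp ht⟩
  have hQle : ∀ m, Q m → m ≤ cs.length w := by
    rintro m ⟨u, -, h⟩
    omega
  set m := Nat.findGreatest Q (cs.length w)
  have hm : 1 ≤ m := Nat.le_findGreatest (hQle 1 hQ1) hQ1
  obtain ⟨u, hw, hlen⟩ : Q m := Nat.findGreatest_spec (hQle 1 hQ1) hQ1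
  have hmax : ¬ Q (m + 1) := fun h =>
    Nat.findGreatest_is_greatest (Nat.lt_succ_self m) (hQle _ h) h
  obtain ⟨m₀, hm₀⟩ : ∃ m₀, m = m₀ + 1 := ⟨m - 1, by omega⟩
  have hnext : ¬ cs.IsRightDescent u (if Even m then t else s) := by
    intro h
    refine hmax ⟨u * cs.simple (if Even m then t else s), ?_, ?_⟩
    · rw [alternatingWord_succ', wordProd_cons, mul_assoc, simple_mul_simple_cancel_left, hw]
    · have := cs.isRightDescent_iff.mp h
      omega
  have hfront : ¬ cs.IsRightDescent u (if Even m₀ then t else s) := by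
    refine cs.not_isRightDescent_of_length_mul_wordProd_cons (ω := alternatingWord s t m₀) ?_
    rw [← wordProd_cons, ← alternatingWord_succ', ← hm₀, ← hw, length_alternatingWord, ← hm₀,
      hlen]
  rcases Nat.even_or_odd m₀ with he | ho
  · have hm_odd : ¬ Even m := by simpa [hm₀, Nat.even_add_one] using he
    rw [if_neg hm_odd] at hnext
    rw [if_pos he] at hfront
    exact ⟨u, m, hw, hlen, hm, hnext, hfront⟩
  · have hm_even : Even m := by simpa [hm₀, Nat.even_add_one] using ho
    rw [if_pos hm_even] at hnext
    rw [if_neg (Nat.not_even_iff_odd.mpr ho)] at hfront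
    exact ⟨u, m, hw, hlen, hm, hfront, hnext⟩

theorem lt_of_not_isRightDescent_mul_alternatingWord {u : W} {s t : B} {m : ℕ}
    (hlen : cs.length (u * cs.wordProd (alternatingWord s t m)) = cs.length u + m)
    (hs : ¬ cs.IsRightDescent (u * cs.wordProd (alternatingWord s t m)) s) :
    M s t = 0 ∨ m < M s t := by
  by_contra! h
  have hred : ¬ cs.IsReduced (alternatingWord t s (m + 1)) :=
    cs.not_isReduced_alternatingWord t s (by rw [M.symmetric]; exact h.1)
      (by rw [M.symmetric]; omega)
  have hshort : cs.length (cs.wordProd (alternatingWord t s (m + 1))) ≤ m := by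
    have := cs.length_wordProd_le (alternatingWord t s (m + 1))
    simp only [IsReduced, length_alternatingWord] at hred this
    omega
  have := cs.length_mul_le u (cs.wordProd (alternatingWord t s (m + 1)))
  rw [alternatingWord_succ, wordProd_concat] at this hshort
  rw [← mul_assoc] at this
  rw [not_isRightDescent_iff] at hs
  omega

end CoxeterSystem

lemma eq_zero_of_isPos_of_isNeg {v : B → ℝ} (hp : IsPos v) (hn : IsNeg v) : v = 0 :=
  funext fun x => le_antisymm (hn x) (hp x)

lemma zero_or_one_le_mul {a b : ℝ} (ha : a = 0 ∨ 1 ≤ a) (hb : b = 0 ∨ 1 ≤ b) :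
    a * b = 0 ∨ 1 ≤ a * b := by
  rcases ha with rfl | ha
  · simp
  rcases hb with rfl | hb
  · simp
  exact Or.inr (one_le_mul_of_one_le_of_one_le ha hb)

lemma zero_or_one_le_add {a b : ℝ} (ha : a = 0 ∨ 1 ≤ a) (hb : b = 0 ∨ 1 ≤ b) :
    a + b = 0 ∨ 1 ≤ a + b := by
  rcases ha with rfl | ha
  · simpa using hb
  rcases hb with rfl | hb
  · simpa using Or.inr ha
  exact Or.inr (by linarith)

def ZeroOrOneLE (v : B → ℝ) : Prop := ∀ x, v x = 0 ∨ 1 ≤ v x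

lemma ZeroOrOneLE.isPos {v : B → ℝ} (h : ZeroOrOneLE v) : IsPos v := fun x => by
  rcases h x with h | h <;> linarith

lemma ZeroOrOneLE.smul_add_smul {a b : ℝ} {v w : B → ℝ} (ha : a = 0 ∨ 1 ≤ a)
    (hb : b = 0 ∨ 1 ≤ b) (hv : ZeroOrOneLE v) (hw : ZeroOrOneLE w) :
    ZeroOrOneLE (a • v + b • w) := fun x =>
  zero_or_one_le_add (zero_or_one_le_mul ha (hv x)) (zero_or_one_le_mul hb (hw x))

lemma zeroOrOneLE_sroot [DecidableEq B] (s : B) : ZeroOrOneLE (sroot s) := fun x => by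
  by_cases h : x = s <;> simp [sroot, h]

/-- Coordinates of `(r_γ r_β)^j γ` in the basis `(γ, β)`, where `c = ⟨γ, β⟩` and
`⟨γ, γ⟩ = ⟨β, β⟩ = 1`. -/
noncomputable def ladder (c : ℝ) : ℕ → ℝ × ℝ
  | 0 => (1, 0)
  | j + 1 => ((ladder c j).1 * (4 * c ^ 2 - 1) + 2 * (ladder c j).2 * c,
      -(ladder c j).2 - 2 * (ladder c j).1 * c)

section Ladder

variable {c : ℝ} (hc : 1 ≤ c)
include hc

lemma ladder_bounds (j : ℕ) :
    1 ≤ (ladder c j).1 ∧ (ladder c j).2 ≤ 0 ∧ -(ladder c j).2 ≤ (ladder c j).1 - 1 := by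
  induction j with
  | zero => simp [ladder]
  | succ j ih =>
    obtain ⟨h₁, h₂, h₃⟩ := ih
    simp only [ladder]
    refine ⟨?_, ?_, ?_⟩ <;>
      nlinarith [mul_le_mul_of_nonneg_right h₃ (by linarith : (0 : ℝ) ≤ 2 * c - 1),
        mul_nonneg (mul_nonneg (sub_nonneg.2 hc) (by linarith : (0 : ℝ) ≤ 2 * c + 1))
          (by linarith : (0 : ℝ) ≤ (ladder c j).1)]

lemma ladder_fst_strictMono : StrictMono fun j => (ladder c j).1 := by
  refine strictMono_nat_of_lt_succ fun j => ?_
  obtain ⟨h₁, h₂, h₃⟩ := ladder_bounds hc j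
  simp only [ladder]
  nlinarith [mul_le_mul_of_nonneg_right h₃ (by linarith : (0 : ℝ) ≤ 2 * c),
    mul_nonneg (mul_nonneg (sub_nonneg.2 hc) (by linarith : (0 : ℝ) ≤ 2 * c + 1))
      (by linarith : (0 : ℝ) ≤ (ladder c j).1)]

end Ladder

lemma linearIndependent_of_one_le_form [Fintype B] {M : CoxeterMatrix B} {γ β : B → ℝ}
    (hγ : form M γ γ = 1) (hβ : form M β β = 1) (hc : 1 ≤ form M γ β) (hne : γ ≠ β) :
    LinearIndependent ℝ ![γ, β] := by
  refine LinearIndependent.pair_iff.mpr fun x y hxy => ?_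
  have h₁ : x + y * form M γ β = 0 := by
    simpa [form_add_left, form_smul_left, hγ, form_comm M β γ, form_zero_left]
      using congrArg (form M · γ) hxy
  have h₂ : x * form M γ β + y = 0 := by
    simpa [form_add_left, form_smul_left, hβ, form_zero_left] using congrArg (form M · β) hxy
  have hy : y * ((form M γ β) ^ 2 - 1) = 0 := by linear_combination form M γ β * h₁ - h₂
  rcases mul_eq_zero.mp hy with rfl | hc₁
  · simpa using h₁
  have hc₁ : form M γ β = 1 := by nlinarith
  rw [hc₁] at h₁
  have hx : x • (γ - β) = 0 := by
    rw [smul_sub, ← hxy, show y = -x by linarith]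
    module
  have hx₀ := (smul_eq_zero.mp hx).resolve_right (sub_ne_zero.mpr hne)
  exact ⟨hx₀, by linarith⟩

lemma injective_ladder [Fintype B] {M : CoxeterMatrix B} {γ β : B → ℝ}
    (hγ : form M γ γ = 1) (hβ : form M β β = 1) (hc : 1 ≤ form M γ β) (hne : γ ≠ β) :
    Function.Injective fun j =>
      (ladder (form M γ β) j).1 • γ + (ladder (form M γ β) j).2 • β :=
  fun j k hjk => (ladder_fst_strictMono hc).injective <| sub_eq_zero.mp <|
    (LinearIndependent.pair_iff.mp (linearIndependent_of_one_le_form hγ hβ hc hne) _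
      ((ladder _ j).2 - (ladder _ k).2) (by
        rw [sub_smul, sub_smul, sub_add_sub_comm, sub_eq_zero]
        exact hjk)).1

lemma map_mul_apply {G V : Type*} [Monoid G] [AddCommMonoid V] [Module ℝ V]
    (ρ : G →* Module.End ℝ V) (a b : G) (v : V) : ρ (a * b) v = ρ a (ρ b v) := by
  rw [map_mul, Module.End.mul_apply]

section Roots

variable {M : CoxeterMatrix B} {ρ : M.Group →* Module.End ℝ (B → ℝ)}

lemma simple_apply_simple_apply (s : B) (v : B → ℝ) :
    ρ (M.simple s) (ρ (M.simple s) v) = v := by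
  rw [← map_mul_apply, ← M.toCoxeterSystem_simple, M.toCoxeterSystem.simple_mul_simple_self,
    map_one, Module.End.one_apply]

variable [DecidableEq B]

lemma isRoot_sroot (s : B) : IsRoot M ρ (sroot s) := ⟨1, s, by simp⟩

lemma IsRoot.map {lam : B → ℝ} (h : IsRoot M ρ lam) (g : M.Group) :
    IsRoot M ρ (ρ g lam) := by
  obtain ⟨w, s, rfl⟩ := h
  exact ⟨g * w, s, map_mul_apply ρ g w _⟩

end Roots

section

variable [Fintype B] [DecidableEq B]

def IsGeometricRepresentation (M : CoxeterMatrix B)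
    (ρ : M.Group →* Module.End ℝ (B → ℝ)) : Prop :=
  ∀ (s : B) (v : B → ℝ), ρ (M.simple s) v = v - (2 * form M v (sroot s)) • sroot s

namespace IsGeometricRepresentation

variable {M : CoxeterMatrix B} {ρ : M.Group →* Module.End ℝ (B → ℝ)}
  (hρ : IsGeometricRepresentation M ρ)
include hρ

lemma simple_apply_sroot_self (s : B) : ρ (M.simple s) (sroot s) = -sroot s := by
  rw [hρ, form_sroot_self]
  module

lemma form_simple_apply (s : B) (u v : B → ℝ) :
    form M (ρ (M.simple s) u) (ρ (M.simple s) v) = form M u v := by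
  rw [hρ, hρ, form_sub_left, form_sub_right, form_sub_right, form_smul_left, form_smul_left,
    form_smul_right, form_smul_right, form_sroot_self, form_comm M (sroot s) v]
  ring

lemma form_map (w : M.Group) (u v : B → ℝ) : form M (ρ w u) (ρ w v) = form M u v := by
  induction w using M.toCoxeterSystem.simple_induction_right generalizing u v with
  | one => simp
  | mul_simple_right w s ih =>
    rw [map_mul_apply, map_mul_apply, CoxeterMatrix.toCoxeterSystem_simple, ih,
      hρ.form_simple_apply]

end IsGeometricRepresentation

namespace IsRoot

variable {M : CoxeterMatrix B} {ρ : M.Group →* Module.End ℝ (B → ℝ)}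
  (hρ : IsGeometricRepresentation M ρ) {lam : B → ℝ}
include hρ

lemma form_self (h : IsRoot M ρ lam) : form M lam lam = 1 := by
  obtain ⟨w, s, rfl⟩ := h
  rw [hρ.form_map, form_sroot_self]

lemma ne_zero (h : IsRoot M ρ lam) : lam ≠ 0 := by
  rintro rfl
  simpa [form_zero_left] using h.form_self hρ

lemma neg (h : IsRoot M ρ lam) : IsRoot M ρ (-lam) := by
  obtain ⟨w, s, rfl⟩ := h
  exact ⟨w * M.simple s, s, by rw [map_mul_apply, hρ.simple_apply_sroot_self, map_neg]⟩

lemma exists_reflection (h : IsRoot M ρ lam) :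
    ∃ r : M.Group, ∀ v, ρ r v = v - (2 * form M v lam) • lam := by
  obtain ⟨w, s, rfl⟩ := h
  refine ⟨w * M.simple s * w⁻¹, fun v => ?_⟩
  rw [map_mul_apply, map_mul_apply, hρ, map_sub, map_smul, Representation.self_inv_apply,
    ← hρ.form_map w, Representation.self_inv_apply]

end IsRoot

def rootInversions (M : CoxeterMatrix B) (ρ : M.Group →* Module.End ℝ (B → ℝ))
    (w : M.Group) : Set (B → ℝ) :=
  {lam | IsPosRoot M ρ lam ∧ IsNeg (ρ w lam)}

namespace IsGeometricRepresentation

variable {M : CoxeterMatrix B} {ρ : M.Group →* Module.End ℝ (B → ℝ)}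
  (hρ : IsGeometricRepresentation M ρ)
include hρ

lemma apply_alternatingWord_sroot {s t : B} (hst : s ≠ t) (m : ℕ) :
    ρ (M.toCoxeterSystem.wordProd (CoxeterSystem.alternatingWord s t m)) (sroot s) =
      (if Even m then dihedralCoeff M s t (m + 1) else dihedralCoeff M s t m) • sroot s +
      (if Even m then dihedralCoeff M s t m else dihedralCoeff M s t (m + 1)) • sroot t := by
  induction m with
  | zero =>
    simp [CoxeterSystem.alternatingWord, dihedralCoeff_zero, dihedralCoeff_one hst]
  | succ m ih =>
    rw [CoxeterSystem.alternatingWord_succ', CoxeterSystem.wordProd_cons,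
      CoxeterMatrix.toCoxeterSystem_simple, map_mul_apply, ih, hρ]
    simp only [form_add_left, form_smul_left, form_sroot_sroot,
      dihedralCoeff_add_two hst, Nat.even_add_one]
    by_cases hm : Even m
    · simp only [hm, if_true, not_true_eq_false, if_false, pairing_self]
      module
    · simp only [hm, if_true, not_false_eq_true, if_false, pairing_self, pairing_comm M t s]
      module

lemma exists_apply_alternatingWord_sroot_eq {s t : B} (hst : s ≠ t) {m : ℕ}
    (hm : M s t = 0 ∨ m < M s t) :
    ∃ a b : ℝ, (a = 0 ∨ 1 ≤ a) ∧ (b = 0 ∨ 1 ≤ b) ∧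
      ρ (M.toCoxeterSystem.wordProd (CoxeterSystem.alternatingWord s t m)) (sroot s) =
        a • sroot s + b • sroot t := by
  have h₀ := dihedralCoeff_eq_zero_or_one_le (M := M) hst (k := m) (hm.imp_right le_of_lt)
  have h₁ := dihedralCoeff_eq_zero_or_one_le (M := M) hst (k := m + 1) hm
  rw [hρ.apply_alternatingWord_sroot hst]
  by_cases he : Even m
  · exact ⟨_, _, by simpa [he] using h₁, by simpa [he] using h₀, by simp [he]⟩
  · exact ⟨_, _, by simpa [he] using h₀, by simpa [he] using h₁, by simp [he]⟩

theorem zeroOrOneLE_apply_sroot (w : M.Group) (s : B)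
    (hs : ¬ M.toCoxeterSystem.IsRightDescent w s) : ZeroOrOneLE (ρ w (sroot s)) := by
  induction hn : M.toCoxeterSystem.length w using Nat.strong_induction_on generalizing w s with
  | _ n ih =>
  by_cases hw : w = 1
  · subst hw
    simpa using zeroOrOneLE_sroot s
  obtain ⟨t, ht⟩ := M.toCoxeterSystem.exists_rightDescent_of_ne_one hw
  have hst : s ≠ t := by
    rintro rfl
    exact hs ht
  obtain ⟨u, m, rfl, hlen, hm, hus, hut⟩ :=
    M.toCoxeterSystem.exists_alternatingWord_suffix (s := s) ht
  obtain ⟨a, b, ha, hb, hab⟩ := hρ.exists_apply_alternatingWord_sroot_eq hst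
    (M.toCoxeterSystem.lt_of_not_isRightDescent_mul_alternatingWord hlen.symm hs)
  rw [map_mul_apply, hab, map_add, map_smul, map_smul]
  exact (ih _ (by omega) u s hus rfl).smul_add_smul ha hb (ih _ (by omega) u t hut rfl)

lemma isNeg_apply_sroot (w : M.Group) (s : B) (hs : M.toCoxeterSystem.IsRightDescent w s) :
    IsNeg (ρ w (sroot s)) := by
  have hw : w = w * M.simple s * M.simple s := by
    rw [← M.toCoxeterSystem_simple, M.toCoxeterSystem.simple_mul_simple_cancel_right]
  have hpos := (hρ.zeroOrOneLE_apply_sroot (w * M.simple s) s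
    (M.toCoxeterSystem.isRightDescent_iff_not_isRightDescent_mul.mp hs)).isPos
  intro x
  rw [hw, map_mul_apply, hρ.simple_apply_sroot_self, map_neg, Pi.neg_apply, neg_nonpos]
  exact hpos x

lemma isPos_or_isNeg {lam : B → ℝ} (h : IsRoot M ρ lam) : IsPos lam ∨ IsNeg lam := by
  obtain ⟨w, s, rfl⟩ := h
  by_cases hs : M.toCoxeterSystem.IsRightDescent w s
  · exact Or.inr (hρ.isNeg_apply_sroot w s hs)
  · exact Or.inl (hρ.zeroOrOneLE_apply_sroot w s hs).isPos

lemma zeroOrOneLE_of_isPosRoot {lam : B → ℝ} (h : IsPosRoot M ρ lam) : ZeroOrOneLE lam := by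
  obtain ⟨⟨w, s, rfl⟩, hpos⟩ := h
  by_cases hs : M.toCoxeterSystem.IsRightDescent w s
  · exact absurd (eq_zero_of_isPos_of_isNeg hpos (hρ.isNeg_apply_sroot w s hs))
      ((isRoot_sroot s).map w |>.ne_zero hρ)
  · exact hρ.zeroOrOneLE_apply_sroot w s hs

lemma eq_sroot_of_forall_ne {lam : B → ℝ} (h : IsPosRoot M ρ lam) {r : B}
    (hz : ∀ u, u ≠ r → lam u = 0) : lam = sroot r := by
  have hlam : lam = lam r • sroot r := funext fun u => by
    by_cases hu : u = r
    · simp [sroot, hu]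
    · simp [sroot, hu, hz u hu]
  have hnorm := h.1.form_self hρ
  rw [hlam, form_smul_left, form_smul_right, form_sroot_self, mul_one] at hnorm
  have hr : lam r = 1 := by nlinarith [h.2 r]
  rw [hlam, hr, one_smul]

lemma isPosRoot_simple_apply {lam : B → ℝ} (h : IsPosRoot M ρ lam) {r : B}
    (hne : lam ≠ sroot r) : IsPosRoot M ρ (ρ (M.simple r) lam) := by
  refine ⟨h.1.map _, (hρ.isPos_or_isNeg (h.1.map _)).resolve_right fun hneg => hne ?_⟩
  refine hρ.eq_sroot_of_forall_ne h fun u hu => le_antisymm ?_ (h.2 u)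
  simpa [hρ r, sroot, hu] using hneg u

lemma finite_rootInversions (w : M.Group) : (rootInversions M ρ w).Finite := by
  induction w using M.toCoxeterSystem.simple_induction_right with
  | one =>
    refine Set.finite_empty.subset fun lam ⟨hlam, hneg⟩ => ?_
    rw [map_one, Module.End.one_apply] at hneg
    exact hlam.1.ne_zero hρ (eq_zero_of_isPos_of_isNeg hlam.2 hneg)
  | mul_simple_right w r ih =>
    refine ((ih.image (ρ (M.simple r))).insert (sroot r)).subset fun lam ⟨hlam, hneg⟩ => ?_
    by_cases hne : lam = sroot r
    · exact Or.inl hne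
    refine Or.inr ⟨ρ (M.simple r) lam, ⟨hρ.isPosRoot_simple_apply hlam hne, ?_⟩,
      simple_apply_simple_apply r lam⟩
    rwa [← map_mul_apply, ← M.toCoxeterSystem_simple]

lemma isRoot_ladder {γ β : B → ℝ} (hγ : IsRoot M ρ γ) (hβ : IsRoot M ρ β) (j : ℕ) :
    IsRoot M ρ ((ladder (form M γ β) j).1 • γ + (ladder (form M γ β) j).2 • β) := by
  induction j with
  | zero => simpa [ladder] using hγ
  | succ j ih =>
    obtain ⟨rγ, hrγ⟩ := hγ.exists_reflection hρ
    obtain ⟨rβ, hrβ⟩ := hβ.exists_reflection hρ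
    convert (ih.map rβ).map rγ using 1
    rw [hrβ, hrγ]
    simp only [form_sub_left, form_add_left, form_smul_left, hγ.form_self hρ,
      hβ.form_self hρ, form_comm M β γ, ladder]
    module

theorem dominates_or_dominates {γ β : B → ℝ} (hγ : IsRoot M ρ γ) (hβ : IsRoot M ρ β)
    (hc : 1 ≤ form M γ β) : Dominates M ρ γ β ∨ Dominates M ρ β γ := by
  by_contra! h
  obtain ⟨w₁, hβ₁, hγ₁⟩ : ∃ w, IsPos (ρ w β) ∧ ¬ IsPos (ρ w γ) := by
    simpa [Dominates] using h.1
  obtain ⟨w₂, hγ₂, hβ₂⟩ : ∃ w, IsPos (ρ w γ) ∧ ¬ IsPos (ρ w β) := by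
    simpa [Dominates] using h.2
  have hne : γ ≠ β := by
    rintro rfl
    exact hγ₁ hβ₁
  replace hγ₁ := (hρ.isPos_or_isNeg (hγ.map w₁)).resolve_left hγ₁
  replace hβ₂ := (hρ.isPos_or_isNeg (hβ.map w₂)).resolve_left hβ₂
  set c := form M γ β
  set χ : ℕ → B → ℝ := fun j => (ladder c j).1 • γ + (ladder c j).2 • β
  have hχ₁ : ∀ j, IsNeg (ρ w₁ (χ j)) := fun j x => by
    obtain ⟨h₁, h₂, -⟩ := ladder_bounds hc j
    simp only [χ, map_add, map_smul, Pi.add_apply, Pi.smul_apply, smul_eq_mul]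
    nlinarith [hγ₁ x, hβ₁ x]
  have hχ₂ : ∀ j, IsPos (ρ w₂ (χ j)) := fun j x => by
    obtain ⟨h₁, h₂, -⟩ := ladder_bounds hc j
    simp only [χ, map_add, map_smul, Pi.add_apply, Pi.smul_apply, smul_eq_mul]
    nlinarith [hγ₂ x, hβ₂ x]
  have hrange : Set.range χ ⊆
      rootInversions M ρ w₁ ∪ Neg.neg '' rootInversions M ρ w₂ := by
    rintro _ ⟨j, rfl⟩
    have hroot := hρ.isRoot_ladder hγ hβ j
    rcases hρ.isPos_or_isNeg hroot with hpos | hneg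
    · exact Or.inl ⟨⟨hroot, hpos⟩, hχ₁ j⟩
    · refine Or.inr ⟨-χ j, ⟨⟨hroot.neg hρ, fun x => ?_⟩, fun x => ?_⟩, neg_neg _⟩
      · exact neg_nonneg.mpr (hneg x)
      · rw [map_neg]
        exact neg_nonpos.mpr (hχ₂ j x)
  exact (Set.infinite_range_of_injective
      (injective_ladder (hγ.form_self hρ) (hβ.form_self hρ) hc hne)).mono hrange
    ((hρ.finite_rootInversions w₁).union ((hρ.finite_rootInversions w₂).image _))

theorem eq_sroot_of_isMinimal {mu : B → ℝ} (hmin : IsMinimal M ρ mu) {t : B}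
    (h : 1 ≤ form M mu (sroot t)) : mu = sroot t := by
  by_contra hne
  rcases hρ.dominates_or_dominates hmin.1.1 (isRoot_sroot t) h with hdom | hdom
  · exact hne (hmin.2 _ ⟨isRoot_sroot t, (zeroOrOneLE_sroot t).isPos⟩ hdom).symm
  · have := hdom (M.simple t) (hρ.isPosRoot_simple_apply hmin.1 hne).2 t
    rw [hρ.simple_apply_sroot_self] at this
    norm_num [sroot] at this

end IsGeometricRepresentation

lemma form_sroot_le_of_zeroOrOneLE (M : CoxeterMatrix B) {v : B → ℝ} (hv : ZeroOrOneLE v)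
    (t : B) : form M v (sroot t) ≤
      v t - {u | u ∈ supp v ∧ u ≠ t ∧ (coxGraph M).Adj t u}.ncard / 2 := by
  classical
  set F := Finset.univ.filter fun u => u ∈ supp v ∧ u ≠ t ∧ (coxGraph M).Adj t u
  have hF : {u | u ∈ supp v ∧ u ≠ t ∧ (coxGraph M).Adj t u}.ncard = F.card := by
    rw [← Set.ncard_coe_finset]
    congr
    ext
    simp [F]
  have hsub : F ⊆ Finset.univ.erase t := fun u hu => by
    simp only [F, Finset.mem_filter] at hu
    simp [hu.2.2.1]
  have hnonpos : ∀ u ∈ Finset.univ.erase t, v u * pairing M u t ≤ 0 := fun u hu =>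
    mul_nonpos_of_nonneg_of_nonpos (hv.isPos u) (pairing_nonpos M (Finset.ne_of_mem_erase hu))
  have hadj : ∀ u ∈ F, v u * pairing M u t ≤ -(1 / 2) := fun u hu => by
    simp only [F, Finset.mem_filter] at hu
    obtain ⟨-, hsupp, -, hut⟩ := hu
    have hvu : 1 ≤ v u := (hv u).resolve_left hsupp
    have hp := pairing_le_neg_half_of_adj M hut.symm
    nlinarith
  rw [form_sroot_right, ← Finset.add_sum_erase _ _ (Finset.mem_univ t), pairing_self, mul_one,
    hF, sub_eq_add_neg]
  gcongr v t + ?_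
  calc ∑ u ∈ Finset.univ.erase t, v u * pairing M u t
      ≤ ∑ u ∈ F, v u * pairing M u t :=
        Finset.sum_le_sum_of_subset_of_nonpos' hsub fun u hu _ => hnonpos u hu
    _ ≤ ∑ _u ∈ F, -(1 / 2 : ℝ) := Finset.sum_le_sum hadj
    _ = -(F.card / 2) := by simp; ring

end

theorem statement19_general [DecidableEq B] [Fintype B] (M : CoxeterMatrix B)
    (ρ : M.Group →* Module.End ℝ (B → ℝ))
    (hρ : ∀ (s : B) (v : B → ℝ),
      ρ (M.simple s) v = v - (2 * form M v (sroot s)) • sroot s)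
    (lam : B → ℝ) (hlam : IsMinimal M ρ lam) (t : B)
    (h1 : lam t = 1)
    (h4 : 4 ≤ {u : B | u ∈ supp lam ∧ u ≠ t ∧ (coxGraph M).Adj t u}.ncard) :
    IsPosRoot M ρ (ρ (M.simple t) lam) ∧
      ¬ IsMinimal M ρ (ρ (M.simple t) lam) := by
  have hρ' : IsGeometricRepresentation M ρ := hρ
  have hc : form M lam (sroot t) ≤ -1 := by
    have := form_sroot_le_of_zeroOrOneLE M (hρ'.zeroOrOneLE_of_isPosRoot hlam.1) t
    have h4' := (Nat.cast_le (α := ℝ)).mpr h4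
    push_cast at h4'
    linarith
  have hne : lam ≠ sroot t := by
    rintro rfl
    rw [form_sroot_self] at hc
    norm_num at hc
  refine ⟨hρ'.isPosRoot_simple_apply hlam.1 hne, fun hmin => ?_⟩
  have hμ := hρ'.eq_sroot_of_isMinimal hmin (t := t) (by
    rw [hρ, form_sub_left, form_smul_left, form_sroot_self]
    linarith)
  have := congrFun (congrArg (ρ (M.simple t)) hμ) t
  rw [simple_apply_simple_apply, hρ'.simple_apply_sroot_self, h1] at this
  norm_num [sroot] at this

theorem statement19 [DecidableEq B] [Fintype B] (M : CoxeterMatrix B)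
    (ρ : M.Group →* Module.End ℝ (B → ℝ))
    (hρ : ∀ (s : B) (v : B → ℝ),
      ρ (M.simple s) v = v - (2 * form M v (sroot s)) • sroot s)
    (lam : B → ℝ) (hlam : IsMinimal M ρ lam) (t : B) (ht : t ∈ supp lam)
    (h1 : lam t = 1)
    (h4 : 4 ≤ {u : B | u ∈ supp lam ∧ u ≠ t ∧ (coxGraph M).Adj t u}.ncard) :
    IsPosRoot M ρ (ρ (M.simple t) lam) ∧
      ¬ IsMinimal M ρ (ρ (M.simple t) lam) :=
  statement19_general M ρ hρ lam hlam t h1 h4
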